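/- Orthogonal Procrustes: Let S ∈ ℝ^{r×m} with m ≥ r, and let Sᵀ = Q₁ Σ Q₂ᵀ be a (thin) singular value decomposition with Q₁ ∈ ℝ^{m×r}, Q₂ ∈ ℝ^{r×r} having orthonormal columns and Σ diagonal with nonnegative entries. Then V* = Q₁ Q₂ᵀ maximizes trace(V S) over all V ∈ ℝ^{m×r} with VᵀV = I_r, and the maximum value equals the sum of the singular values of S. -/
import Mathlib


open Matrix Finset

/-- orthogonal Procrustes problem. If `Sᵀ = Q₁ Σ Q₂ᵀ` is a thin
SVD, then `V* = Q₁Q₂ᵀ` maximizes `trace(VS)` over the Stiefel manifold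
`{V : VᵀV = I}`, and the maximum equals the sum of the singular values. -/
theorem orthogonal_procrustes
    (r m : ℕ) (hrm : r ≤ m)
    (S : Matrix (Fin r) (Fin m) ℝ)
    (Q₁ : Matrix (Fin m) (Fin r) ℝ) (Q₂ : Matrix (Fin r) (Fin r) ℝ)
    (d : Fin r → ℝ) (hd : ∀ i, 0 ≤ d i)
    (hQ₁ : Q₁ᵀ * Q₁ = (1 : Matrix (Fin r) (Fin r) ℝ))
    (hQ₂ : Q₂ᵀ * Q₂ = (1 : Matrix (Fin r) (Fin r) ℝ))
    (hSVD : Sᵀ = Q₁ * Matrix.diagonal d * Q₂ᵀ) :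
    (∀ V : Matrix (Fin m) (Fin r) ℝ,
        Vᵀ * V = (1 : Matrix (Fin r) (Fin r) ℝ) →
        Matrix.trace (V * S) ≤ Matrix.trace ((Q₁ * Q₂ᵀ) * S)) ∧
    Matrix.trace ((Q₁ * Q₂ᵀ) * S) = ∑ i, d i := by
  have hS : S = Q₂ * Matrix.diagonal d * Q₁ᵀ := by
    have h := congrArg Matrix.transpose hSVD
    simpa [Matrix.transpose_mul, Matrix.diagonal_transpose, Matrix.mul_assoc] using h
  have key : ∀ V : Matrix (Fin m) (Fin r) ℝ,
      Matrix.trace (V * S) = ∑ i, d i * ((Q₁ᵀ * (V * Q₂)) i i) := by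
    intro V
    rw [hS, show V * (Q₂ * Matrix.diagonal d * Q₁ᵀ)
        = (V * Q₂ * Matrix.diagonal d) * Q₁ᵀ by
      simp [Matrix.mul_assoc]]
    rw [Matrix.trace_mul_comm, show Q₁ᵀ * (V * Q₂ * Matrix.diagonal d)
        = (Q₁ᵀ * (V * Q₂)) * Matrix.diagonal d by simp [Matrix.mul_assoc]]
    simp [Matrix.trace, Matrix.diag, Matrix.mul_diagonal, mul_comm]
  have hmax : Matrix.trace ((Q₁ * Q₂ᵀ) * S) = ∑ i, d i := by
    rw [key]
    have hW : Q₁ᵀ * (Q₁ * Q₂ᵀ * Q₂) = 1 := by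
      rw [Matrix.mul_assoc, hQ₂, Matrix.mul_one, hQ₁]
    rw [hW]
    simp [Matrix.one_apply]
  refine ⟨fun V hV => ?_, hmax⟩
  rw [key, hmax]
  have hVQ : (V * Q₂)ᵀ * (V * Q₂) = 1 := by
    rw [Matrix.transpose_mul, Matrix.mul_assoc, ← Matrix.mul_assoc Vᵀ, hV,
      Matrix.one_mul, hQ₂]
  have hdiag : ∀ i, (Q₁ᵀ * (V * Q₂)) i i ≤ 1 := by
    intro i
    set A := V * Q₂ with hA
    have h1 : ∑ k, Q₁ k i ^ 2 = 1 := by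
      have := congrFun (congrFun hQ₁ i) i
      simpa [Matrix.mul_apply, Matrix.one_apply, Matrix.transpose_apply, sq] using this
    have h2 : ∑ k, A k i ^ 2 = 1 := by
      have := congrFun (congrFun hVQ i) i
      simpa [Matrix.mul_apply, Matrix.one_apply, Matrix.transpose_apply, sq] using this
    have hcs := Finset.sum_mul_sq_le_sq_mul_sq Finset.univ
      (fun k => Q₁ k i) (fun k => A k i)
    rw [h1, h2, one_mul] at hcs
    have heq : (Q₁ᵀ * A) i i = ∑ k, Q₁ k i * A k i := by
      simp [Matrix.mul_apply, Matrix.transpose_apply]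
    rw [heq]
    nlinarith [hcs]
  calc ∑ i, d i * (Q₁ᵀ * (V * Q₂)) i i ≤ ∑ i, d i * 1 :=
        Finset.sum_le_sum fun i _ => mul_le_mul_of_nonneg_left (hdiag i) (hd i)
    _ = ∑ i, d i := by simp
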